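/- arXiv:1604.02833 — 2 statements merged into one kernel-verified Lean document; each statement's English description precedes it below -/
import Mathlib

section
/- If d is a proper tree decomposition of a chordal finite simple graph g, then bags(d) = MaxClq(g); that is, the set of bags of d is exactly the set of maximal cliques of g. -/
open SimpleGraph

/-- A (candidate) tree decomposition: a finite tree together with a bag for each tree node. -/
structure TreeDecomp (V : Type) where
  T : Type
  tFinite : Finite T
  tree : SimpleGraph T
  isTree : tree.IsTree
  β : T → Set V

/-- The set of bags of a tree decomposition. -/
def TreeDecomp.bags {V : Type} (d : TreeDecomp V) : Set (Set V) := Set.range d.β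

/-- `d` is a tree decomposition of the graph `g`. -/
def IsTD {V : Type} (g : SimpleGraph V) (d : TreeDecomp V) : Prop :=
  (∀ v : V, ∃ i : d.T, v ∈ d.β i) ∧
  (∀ u v : V, g.Adj u v → ∃ i : d.T, u ∈ d.β i ∧ v ∈ d.β i) ∧
  (∀ (i j k : d.T) (p : d.tree.Walk i k),
    p.IsPath → j ∈ p.support → d.β i ∩ d.β k ⊆ d.β j)

/-- `d' ⊑ d`: every bag of `d'` is contained in some bag of `d`. -/
def Subsumes {V : Type} (d' d : TreeDecomp V) : Prop :=
  ∀ b ∈ d'.bags, ∃ b' ∈ d.bags, b ⊆ b'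

/-- `d'` strictly subsumes `d`. -/
def StrictlySubsumes {V : Type} (d' d : TreeDecomp V) : Prop :=
  Subsumes d' d ∧ ¬ d.bags ⊆ d'.bags

/-- `d` is a proper tree decomposition of `g`. -/
def IsProperTD {V : Type} (g : SimpleGraph V) (d : TreeDecomp V) : Prop :=
  IsTD g d ∧ ∀ d' : TreeDecomp V, IsTD g d' → ¬ StrictlySubsumes d' d

/-- The graph obtained from `g` by saturating every bag of `d`. -/
def saturate {V : Type} (g : SimpleGraph V) (d : TreeDecomp V) : SimpleGraph V where
  Adj u v := g.Adj u v ∨ (u ≠ v ∧ ∃ i : d.T, u ∈ d.β i ∧ v ∈ d.β i)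
  symm := by
    constructor
    intro u v h
    rcases h with h | ⟨hne, i, hu, hv⟩
    · exact Or.inl h.symm
    · exact Or.inr ⟨hne.symm, i, hv, hu⟩
  loopless := by
    constructor
    intro u h
    rcases h with h | ⟨hne, _⟩
    · exact g.loopless.irrefl u h
    · exact hne rfl

/-- A graph is chordal if every cycle of length greater than three has a chord,
i.e. an edge joining two vertices of the cycle that are non-adjacent on the cycle. -/
def IsChordal {V : Type} (h : SimpleGraph V) : Prop :=
  ∀ (v : V) (c : h.Walk v v), c.IsCycle → 3 < c.length →
    ∃ u w : V, u ∈ c.support ∧ w ∈ c.support ∧ h.Adj u w ∧ s(u, w) ∉ c.edges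

/-- The set of maximal cliques of `g`. -/
def MaxClq {V : Type} (g : SimpleGraph V) : Set (Set V) :=
  {C | g.IsClique C ∧ ∀ C' : Set V, g.IsClique C' → C ⊆ C' → C = C'}

/-- The set of minimal triangulations of `g` (chordal supergraphs on the same vertex
set, minimal with respect to edge inclusion). -/
def MinTri {V : Type} (g : SimpleGraph V) : Set (SimpleGraph V) :=
  {h | g ≤ h ∧ IsChordal h ∧ ∀ h' : SimpleGraph V, g ≤ h' → h' < h → ¬ IsChordal h'}

/-!
A chordal graph has a clique tree, i.e. a tree decomposition whose bags are exactly maximal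
cliques. By Dirac's lemma (minimal separators of a chordal graph are cliques, hence a
non-complete chordal graph has two non-adjacent simplicial vertices) one can remove a simplicial
vertex `v`, take a clique tree of the rest, and hang a leaf with bag `N(v) ∪ {v}` next to a bag
containing the clique `N(v)`. By the Helly property of subtrees of a tree, every clique lies in a
bag of every tree decomposition, so the clique tree is subsumed by `d`; properness of `d` then
forces every bag of `d` to be a bag of the clique tree. Conversely every maximal clique lies in a
bag of `d`, which is a clique and hence equals it.
-/

namespace SimpleGraph

variable {V : Type*} {G : SimpleGraph V}

def ReachIn (G : SimpleGraph V) (D : Set V) (x y : V) : Prop :=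
  ∃ p : G.Walk x y, ∀ z ∈ p.support, z ∈ D

namespace ReachIn

variable {D D' : Set V} {x y z : V}

theorem refl (hx : x ∈ D) : G.ReachIn D x x := ⟨.nil, by simpa⟩

theorem left_mem (h : G.ReachIn D x y) : x ∈ D :=
  h.elim fun p hp ↦ hp x p.start_mem_support

theorem right_mem (h : G.ReachIn D x y) : y ∈ D :=
  h.elim fun p hp ↦ hp y p.end_mem_support

theorem symm (h : G.ReachIn D x y) : G.ReachIn D y x :=
  h.elim fun p hp ↦ ⟨p.reverse, by simpa using hp⟩

theorem trans (h : G.ReachIn D x y) (h' : G.ReachIn D y z) : G.ReachIn D x z := by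
  obtain ⟨p, hp⟩ := h
  obtain ⟨q, hq⟩ := h'
  exact ⟨p.append q, by simp only [Walk.mem_support_append_iff]; grind⟩

theorem mono (h : G.ReachIn D x y) (hD : D ⊆ D') : G.ReachIn D' x y :=
  h.elim fun p hp ↦ ⟨p, fun z hz ↦ hD (hp z hz)⟩

theorem map {W : Type*} {G' : SimpleGraph W} (f : G →g G') {D' : Set W}
    (hD : ∀ z ∈ D, f z ∈ D') (h : G.ReachIn D x y) : G'.ReachIn D' (f x) (f y) :=
  h.elim fun p hp ↦ ⟨p.map f, by simpa using fun z hz ↦ hD z (hp z hz)⟩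

end ReachIn

theorem Adj.reachIn {D : Set V} {x y : V} (h : G.Adj x y) (hx : x ∈ D) (hy : y ∈ D) :
    G.ReachIn D x y :=
  ⟨h.toWalk, by simp [hx, hy]⟩

theorem Walk.reachIn_of_mem_support {D : Set V} {x y z : V} (p : G.Walk x y)
    (hp : ∀ w ∈ p.support, w ∈ D) (hz : z ∈ p.support) : G.ReachIn D x z := by
  classical
  exact ⟨p.takeUntil z hz, fun w hw ↦ hp w (p.support_takeUntil_subset_support hz hw)⟩

theorem ReachIn.reachIn_component {D : Set V} {a x y : V} (hx : G.ReachIn D a x)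
    (hy : G.ReachIn D a y) : G.ReachIn {z | G.ReachIn D a z} x y := by
  obtain ⟨p, hp⟩ := hx.symm.trans hy
  exact ⟨p, fun z hz ↦ hx.trans (p.reachIn_of_mem_support hp hz)⟩

theorem Walk.exists_reachIn_adj_of_not_mem {D : Set V} {x y : V} (p : G.Walk x y)
    (hx : x ∈ D) (hy : y ∉ D) :
    ∃ w z, G.ReachIn D x w ∧ z ∈ p.support ∧ z ∉ D ∧ G.Adj w z := by
  induction p with
  | nil => exact absurd hx hy
  | @cons x x₁ y h q ih =>
    by_cases hx₁ : x₁ ∈ D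
    · obtain ⟨w, z, hw, hz, hzD, hwz⟩ := ih hx₁ hy
      exact ⟨w, z, (h.reachIn hx hx₁).trans hw, by simp [hz], hzD, hwz⟩
    · exact ⟨x, x₁, .refl hx, by simp, hx₁, h⟩

theorem ReachIn.exists_adj_of_insert {D : Set V} {a b u : V}
    (h : G.ReachIn (insert u D) a b) (hab : ¬ G.ReachIn D a b) (ha : a ∈ D) :
    ∃ w, G.ReachIn D a w ∧ G.Adj w u := by
  classical
  obtain ⟨p, hp⟩ := h
  have hu : u ∈ p.support := by
    by_contra hu
    exact hab ⟨p, fun z hz ↦ (hp z hz).resolve_left fun h ↦ hu (h ▸ hz)⟩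
  have huD : u ∉ D := fun huD ↦ hab ⟨p, fun z hz ↦ (hp z hz).elim (· ▸ huD) id⟩
  obtain ⟨w, z, hw, hz, hzD, hwz⟩ := (p.takeUntil u hu).exists_reachIn_adj_of_not_mem ha huD
  obtain rfl : z = u := (hp z (p.support_takeUntil_subset_support hu hz)).resolve_right hzD
  exact ⟨w, hw, hwz⟩

namespace Walk

theorem exists_eq_append_append_of_mem_support [DecidableEq V] {x y u w : V} (p : G.Walk x y)
    (hu : u ∈ p.support) (hw : w ∈ p.support) :
    (∃ (A : G.Walk x u) (B : G.Walk u w) (C : G.Walk w y), p = A.append (B.append C)) ∨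
      ∃ (A : G.Walk x w) (B : G.Walk w u) (C : G.Walk u y), p = A.append (B.append C) := by
  have hp := p.take_spec hu
  rw [← hp, mem_support_append_iff] at hw
  rcases hw with hw | hw
  · refine .inr ⟨(p.takeUntil u hu).takeUntil w hw, (p.takeUntil u hu).dropUntil w hw,
      p.dropUntil u hu, ?_⟩
    rw [append_assoc, (p.takeUntil u hu).take_spec hw, hp]
  · exact .inl ⟨_, _, _, by rw [(p.dropUntil u hu).take_spec hw, hp]⟩

/-- A shortest path inside `P` has no chords: a chord would shortcut it. -/
theorem exists_isPath_isChordless {P : Set V} {x y : V} (h : G.ReachIn P x y) :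
    ∃ m : G.Walk x y, m.IsPath ∧ m.IsChordless ∧ ∀ z ∈ m.support, z ∈ P := by
  classical
  obtain ⟨m, ⟨hm, hmP⟩, hmin⟩ := exists_minimalFor_of_wellFoundedLT
    (fun p : G.Walk x y ↦ p.IsPath ∧ ∀ z ∈ p.support, z ∈ P) length
    (h.elim fun p hp ↦
      ⟨p.bypass, p.bypass_isPath, fun z hz ↦ hp z (p.support_bypass_subset_support hz)⟩)
  refine ⟨m, hm, ?_, hmP⟩
  have hshortcut {u w : V} (A : G.Walk x u) (B : G.Walk u w) (C : G.Walk w y)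
      (hABC : m = A.append (B.append C)) (huw : G.Adj u w) : s(u, w) ∈ m.edges := by
    let q := (A.append (cons huw C)).bypass
    have hqP : ∀ z ∈ q.support, z ∈ P := fun z hz ↦ by
      have := (A.append (cons huw C)).support_bypass_subset_support hz
      simp only [mem_support_append_iff, support_cons, List.mem_cons] at this
      exact hmP z (by rw [hABC]; simp only [mem_support_append_iff]; grind [start_mem_support])
    have hlen := hmin ⟨(A.append (cons huw C)).bypass_isPath, hqP⟩
    have hqlen := (A.append (cons huw C)).length_bypass_le_length
    simp only [hABC, length_append, length_cons] at hlen hqlen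
    cases B with
    | nil => exact absurd huw (G.loopless.irrefl u)
    | cons h B =>
      cases B with
      | nil => simp [hABC]
      | cons => simp only [length_cons] at hlen; omega
  refine isChordless_iff_forall_mem_edges.mpr fun u w hu hw huw ↦ ?_
  rcases m.exists_eq_append_append_of_mem_support hu hw with ⟨A, B, C, h⟩ | ⟨A, B, C, h⟩
  · exact hshortcut A B C h huw
  · rw [Sym2.eq_swap]
    exact hshortcut A B C h huw.symm

theorem IsChordless.append {u v w : V} {p : G.Walk u v} {q : G.Walk v w} (hp : p.IsChordless)
    (hq : q.IsChordless)
    (hpq : ∀ x ∈ p.support, ∀ y ∈ q.support, G.Adj x y → x ∈ q.support ∨ y ∈ p.support) :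
    (p.append q).IsChordless := by
  refine isChordless_iff_forall_mem_edges.mpr fun x y hx hy hxy ↦ ?_
  rw [mem_support_append_iff] at hx hy
  rw [edges_append, List.mem_append]
  have hp' (hx : x ∈ p.support) (hy : y ∈ p.support) : s(x, y) ∈ p.edges ∨ s(x, y) ∈ q.edges :=
    .inl (hp.mem_edges hx hy hxy)
  have hq' (hx : x ∈ q.support) (hy : y ∈ q.support) : s(x, y) ∈ p.edges ∨ s(x, y) ∈ q.edges :=
    .inr (hq.mem_edges hx hy hxy)
  rcases hx with hx | hx <;> rcases hy with hy | hy
  · exact hp' hx hy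
  · exact (hpq x hx y hy hxy).elim (hq' · hy) (hp' hx)
  · exact (hpq y hy x hx hxy.symm).elim (hq' hx) (hp' · hy)
  · exact hq' hx hy

theorem IsPath.start_notMem_support_tail {x y : V} {p : G.Walk x y} (hp : p.IsPath) :
    x ∉ p.support.tail :=
  (List.nodup_cons.mp (p.cons_tail_support ▸ hp.support_nodup)).1

theorem two_le_length_of_not_adj {x y : V} (p : G.Walk x y) (hne : x ≠ y) (hxy : ¬ G.Adj x y) :
    2 ≤ p.length := by
  have h0 : p.length ≠ 0 := fun h ↦ hne (p.eq_of_length_eq_zero h)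
  have h1 : p.length ≠ 1 := fun h ↦ hxy (p.adj_of_length_eq_one h)
  omega

end Walk

theorem ReachIn.exists_isPath_isChordless_through {D : Set V} {a x y x' y' : V}
    (hx' : G.ReachIn D a x') (hy' : G.ReachIn D a y') (hx : G.Adj x x') (hy : G.Adj y y') :
    ∃ m : G.Walk x y, m.IsPath ∧ m.IsChordless ∧
      ∀ z ∈ m.support, z = x ∨ z = y ∨ G.ReachIn D a z := by
  apply Walk.exists_isPath_isChordless
  have hmono : {z | G.ReachIn D a z} ⊆ {z | z = x ∨ z = y ∨ G.ReachIn D a z} :=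
    fun z hz ↦ .inr (.inr hz)
  exact ((hx.reachIn (.inl rfl) (.inr (.inr hx'))).trans
    ((hx'.reachIn_component hy').mono hmono)).trans
    (hy.symm.reachIn (.inr (.inr hy')) (.inr (.inl rfl)))

def IsSimplicialIn (G : SimpleGraph V) (s : Set V) (v : V) : Prop :=
  G.IsClique (s ∩ G.neighborSet v)

theorem IsSimplicialIn.mono {s t : Set V} {v : V} (h : G.IsSimplicialIn t v)
    (hst : s ∩ G.neighborSet v ⊆ t) : G.IsSimplicialIn s v :=
  h.subset (Set.subset_inter hst Set.inter_subset_right)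

def HasNonadjSimplicialPair (G : SimpleGraph V) (s : Set V) : Prop :=
  ∃ x ∈ s, ∃ y ∈ s, x ≠ y ∧ ¬ G.Adj x y ∧ G.IsSimplicialIn s x ∧ G.IsSimplicialIn s y

theorem IsSimplicialIn.maximal_insert {s : Set V} {v : V}
    (hsimp : G.IsSimplicialIn s v) (hv : v ∈ s) :
    Maximal (fun C ↦ G.IsClique C ∧ C ⊆ s) (insert v (s ∩ G.neighborSet v)) := by
  refine maximal_subset_iff'.mpr ⟨⟨isClique_insert.mpr ⟨hsimp, fun u hu _ ↦ hu.2⟩,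
    Set.insert_subset hv Set.inter_subset_left⟩, fun C ⟨hC, hCs⟩ hsub u hu ↦ ?_⟩
  obtain rfl | huv := eq_or_ne u v
  · exact .inl rfl
  · exact .inr ⟨hCs hu, hC (hsub (.inl rfl)) hu huv.symm⟩

theorem IsSimplicialIn.maximal_of_maximal_diff {s C : Set V} {v : V}
    (hsimp : G.IsSimplicialIn s v) (hC : Maximal (fun C ↦ G.IsClique C ∧ C ⊆ s \ {v}) C)
    (hne : C ≠ s ∩ G.neighborSet v) : Maximal (fun C ↦ G.IsClique C ∧ C ⊆ s) C := by
  refine maximal_subset_iff'.mpr ⟨⟨hC.prop.1, hC.prop.2.trans Set.sdiff_subset⟩,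
    fun C' ⟨hC', hC's⟩ hsub ↦ hC.le_of_ge ⟨hC', fun u hu ↦ ⟨hC's hu, fun huv ↦ ?_⟩⟩ hsub⟩
  subst huv
  refine hne (hC.eq_of_subset ⟨hsimp, fun w hw ↦ ⟨hw.1, fun h ↦ ?_⟩⟩ fun w hw ↦ ?_)
  · exact G.loopless.irrefl _ (h ▸ hw.2)
  · have hwv : w ≠ u := fun h ↦ (hC.prop.2 hw).2 h
    exact ⟨hC's (hsub hw), hC' hu (hsub hw) hwv.symm⟩

/-- A vertex of the component of `a` in `s \ S` has all its neighbours in `s` inside that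
component or in `S`. -/
theorem exists_isSimplicialIn_of_isClique_separator {s S : Set V} (hS : G.IsClique S) {a : V}
    (ha : a ∈ s \ S)
    (h : G.IsClique (s ∩ (S ∪ {z | G.ReachIn (s \ S) a z})) ∨
      G.HasNonadjSimplicialPair (s ∩ (S ∪ {z | G.ReachIn (s \ S) a z}))) :
    ∃ x, G.ReachIn (s \ S) a x ∧ G.IsSimplicialIn s x := by
  have hnbhd {x : V} (hx : G.ReachIn (s \ S) a x) :
      s ∩ G.neighborSet x ⊆ s ∩ (S ∪ {z | G.ReachIn (s \ S) a z}) := by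
    intro z ⟨hz, hxz⟩
    refine ⟨hz, or_iff_not_imp_left.mpr fun hzS ↦ ?_⟩
    exact hx.trans (hxz.reachIn hx.right_mem ⟨hz, hzS⟩)
  rcases h with hclique | ⟨x, hx, y, hy, hne, hxy, hsx, hsy⟩
  · exact ⟨a, .refl ha, hclique.subset (hnbhd (.refl ha))⟩
  · rcases hx.2 with hxS | hxC
    · rcases hy.2 with hyS | hyC
      · exact (hxy (hS hxS hyS hne)).elim
      · exact ⟨y, hyC, hsy.mono (hnbhd hyC)⟩
    · exact ⟨x, hxC, hsx.mono (hnbhd hxC)⟩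

end SimpleGraph

section Chordal

variable {V : Type} {g : SimpleGraph V}

/-- Shortest `x`–`y` paths through the components of `a` and of `b` close up to a cycle whose
only possible chord is `xy`. -/
theorem IsChordal.adj_of_exists_adj_reachIn (hg : IsChordal g) {D : Set V} {a b x y : V}
    (hab : ¬ g.ReachIn D a b) (hne : x ≠ y)
    (hxa : ∃ w, g.ReachIn D a w ∧ g.Adj x w) (hya : ∃ w, g.ReachIn D a w ∧ g.Adj y w)
    (hxb : ∃ w, g.ReachIn D b w ∧ g.Adj x w) (hyb : ∃ w, g.ReachIn D b w ∧ g.Adj y w) :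
    g.Adj x y := by
  by_contra hxy
  obtain ⟨xa, hxa, hxxa⟩ := hxa
  obtain ⟨ya, hya, hyya⟩ := hya
  obtain ⟨xb, hxb, hxxb⟩ := hxb
  obtain ⟨yb, hyb, hyyb⟩ := hyb
  obtain ⟨m, hm, hmc, hmD⟩ := hxa.exists_isPath_isChordless_through hya hxxa hyya
  obtain ⟨m', hm', hmc', hmD'⟩ := hyb.exists_isPath_isChordless_through hxb hyyb hxxb
  have hsep {z w : V} (hz : g.ReachIn D a z) (hw : g.ReachIn D b w) : ¬ g.Adj z w :=
    fun hzw ↦ hab ((hz.trans (hzw.reachIn hz.right_mem hw.right_mem)).trans hw.symm)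
  have hcommon : ∀ z ∈ m.support, z ∈ m'.support → z = x ∨ z = y := fun z hz hz' ↦ by
    rcases hmD z hz with h | h | hza
    · exact .inl h
    · exact .inr h
    rcases hmD' z hz' with h | h | hzb
    · exact .inr h
    · exact .inl h
    · exact (hab (hza.trans hzb.symm)).elim
  have hcycle : (m.append m').IsCycle := by
    refine hm.isCycle_append hm' (fun z hz hz' ↦ ?_)
      (.inl (by have := m.two_le_length_of_not_adj hne hxy; omega))
    rcases hcommon z (List.mem_of_mem_tail hz) (List.mem_of_mem_tail hz') with rfl | rfl
    · exact hm.start_notMem_support_tail hz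
    · exact hm'.start_notMem_support_tail hz'
  have hlength : 3 < (m.append m').length := by
    have := m.two_le_length_of_not_adj hne hxy
    have := m'.two_le_length_of_not_adj hne.symm (hxy ∘ Adj.symm)
    simp only [Walk.length_append]
    omega
  have hchordless : (m.append m').IsChordless := by
    refine hmc.append hmc' fun u hu w hw huw ↦ ?_
    rcases hmD u hu with rfl | rfl | hua
    · exact .inl m'.end_mem_support
    · exact .inl m'.start_mem_support
    rcases hmD' w hw with rfl | rfl | hwb
    · exact .inr m.end_mem_support
    · exact .inr m.start_mem_support
    · exact (hsep hua hwb huw).elim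
  obtain ⟨u, w, hu, hw, huw, hnot⟩ := hg x _ hcycle hlength
  exact hnot (hchordless.mem_edges hu hw huw)

theorem IsChordal.exists_isClique_separator [Finite V] (hg : IsChordal g) (s : Set V) {a b : V}
    (hab : a ≠ b) (hnadj : ¬ g.Adj a b) :
    ∃ S : Set V, a ∉ S ∧ b ∉ S ∧ ¬ g.ReachIn (s \ S) a b ∧ g.IsClique S := by
  have hN : ¬ g.ReachIn (s \ g.neighborSet a) a b := by
    rintro ⟨_ | ⟨h, q⟩, hp⟩
    · exact hab rfl
    · exact (hp _ (by simp)).2 h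
  obtain ⟨S, hS⟩ := exists_minimal_of_wellFoundedLT
    (fun S : Set V ↦ a ∉ S ∧ b ∉ S ∧ ¬ g.ReachIn (s \ S) a b)
    ⟨g.neighborSet a, g.loopless.irrefl a, hnadj, hN⟩
  obtain ⟨haS, hbS, hsep⟩ := hS.prop
  have hadj : ∀ u ∈ S, (∃ w, g.ReachIn (s \ S) a w ∧ g.Adj u w) ∧
      ∃ w, g.ReachIn (s \ S) b w ∧ g.Adj u w := by
    intro u hu
    have hreach : g.ReachIn (insert u (s \ S)) a b := by
      by_contra h
      refine hS.not_prop_of_lt (Set.sdiff_singleton_ssubset.mpr hu)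
        ⟨fun h' ↦ haS h'.1, fun h' ↦ hbS h'.1, fun h' ↦ h (h'.mono fun z hz ↦ ?_)⟩
      by_cases hzu : z = u
      · exact .inl hzu
      · exact .inr ⟨hz.1, fun hzS ↦ hz.2 ⟨hzS, hzu⟩⟩
    have hmem {z : V} (hz : z ∈ insert u (s \ S)) (hzS : z ∉ S) : z ∈ s \ S :=
      hz.resolve_left fun h ↦ hzS (h ▸ hu)
    obtain ⟨w, hw, hwu⟩ := hreach.exists_adj_of_insert hsep (hmem hreach.left_mem haS)
    obtain ⟨w', hw', hwu'⟩ := hreach.symm.exists_adj_of_insert (hsep ∘ ReachIn.symm)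
      (hmem hreach.right_mem hbS)
    exact ⟨⟨w, hw, hwu.symm⟩, w', hw', hwu'.symm⟩
  exact ⟨S, haS, hbS, hsep, fun x hx y hy hne ↦ hg.adj_of_exists_adj_reachIn hsep hne
    (hadj x hx).1 (hadj y hy).1 (hadj x hx).2 (hadj y hy).2⟩

theorem IsChordal.isClique_or_hasNonadjSimplicialPair [Finite V] (hg : IsChordal g)
    (s : Set V) : g.IsClique s ∨ g.HasNonadjSimplicialPair s := by
  induction s using WellFoundedLT.induction with
  | _ s ih =>
  by_cases hs : g.IsClique s
  · exact .inl hs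
  obtain ⟨a, ha, b, hb, hab, hnadj⟩ : ∃ a ∈ s, ∃ b ∈ s, a ≠ b ∧ ¬ g.Adj a b := by
    simpa [IsClique, Set.Pairwise] using hs
  obtain ⟨S, haS, hbS, hsep, hS⟩ := hg.exists_isClique_separator s hab hnadj
  have hcomponent {a b : V} (ha : a ∈ s) (haS : a ∉ S) (hb : b ∈ s) (hbS : b ∉ S)
      (hsep : ¬ g.ReachIn (s \ S) a b) : ∃ x, g.ReachIn (s \ S) a x ∧ g.IsSimplicialIn s x :=
    exists_isSimplicialIn_of_isClique_separator hS ⟨ha, haS⟩ <| ih _ <|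
      (Set.ssubset_iff_of_subset Set.inter_subset_left).mpr
        ⟨b, hb, fun h ↦ h.2.elim hbS hsep⟩
  obtain ⟨x, hx, hsx⟩ := hcomponent ha haS hb hbS hsep
  obtain ⟨y, hy, hsy⟩ := hcomponent hb hbS ha haS (hsep ∘ ReachIn.symm)
  refine .inr ⟨x, hx.right_mem.1, y, hy.right_mem.1, ?_, fun hxy ↦ ?_, hsx, hsy⟩
  · rintro rfl
    exact hsep (hx.trans hy.symm)
  · exact hsep ((hx.trans (hxy.reachIn hx.right_mem hy.right_mem)).trans hy.symm)

theorem IsChordal.exists_isSimplicialIn [Finite V] (hg : IsChordal g) {s : Set V}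
    (hs : s.Nonempty) : ∃ v ∈ s, g.IsSimplicialIn s v := by
  rcases hg.isClique_or_hasNonadjSimplicialPair s with h | ⟨x, hx, -, -, -, -, hsx, -⟩
  · obtain ⟨v, hv⟩ := hs
    exact ⟨v, hv, h.subset Set.inter_subset_left⟩
  · exact ⟨x, hx, hsx⟩

end Chordal

namespace SimpleGraph

variable {T : Type*} {t : SimpleGraph T}

/-- In a tree these are the vertex sets of subtrees. -/
def IsPathClosed (t : SimpleGraph T) (A : Set T) : Prop :=
  ∀ ⦃i k : T⦄ (p : t.Walk i k), p.IsPath → i ∈ A → k ∈ A → ∀ j ∈ p.support, j ∈ A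

theorem isPathClosed_univ : t.IsPathClosed Set.univ := fun _ _ _ _ _ _ _ _ ↦ trivial

theorem IsPathClosed.inter {A B : Set T} (hA : t.IsPathClosed A) (hB : t.IsPathClosed B) :
    t.IsPathClosed (A ∩ B) :=
  fun _ _ p hp hi hk j hj ↦ ⟨hA p hp hi.1 hk.1 j hj, hB p hp hi.2 hk.2 j hj⟩

theorem IsPathClosed.reachIn {A : Set T} (hA : t.IsPathClosed A) (ht : t.Connected) {i k : T}
    (hi : i ∈ A) (hk : k ∈ A) : t.ReachIn A i k := by
  classical
  exact (ht.preconnected i k).elim fun p ↦ ⟨p.bypass, hA _ p.bypass_isPath hi hk⟩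

theorem IsAcyclic.isPathClosed_of_reachIn (ht : t.IsAcyclic) {A : Set T}
    (h : ∀ i ∈ A, ∀ k ∈ A, t.ReachIn A i k) : t.IsPathClosed A := by
  classical
  intro i k p hp hi hk j hj
  obtain ⟨q, hq⟩ := h i hi k hk
  have hpq : p = q.bypass :=
    congrArg Subtype.val ((ht.subsingleton_path i k).elim ⟨p, hp⟩ ⟨q.bypass, q.bypass_isPath⟩)
  exact hq j (q.support_bypass_subset_support (hpq ▸ hj))

/-- At a step from `B \ A` to `A \ B`, the tree paths from its two ends to a point of `A ∩ B`
would leave `A` or `B`. -/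
theorem IsTree.exists_mem_inter_of_walk (ht : t.IsTree) {A B : Set T} (hA : t.IsPathClosed A)
    (hB : t.IsPathClosed B) (hAB : (A ∩ B).Nonempty) {x y : T} (p : t.Walk x y) (hx : x ∈ B)
    (hy : y ∈ A) (hp : ∀ z ∈ p.support, z ∈ A ∪ B) : ∃ m ∈ p.support, m ∈ A ∩ B := by
  induction p with
  | nil => exact ⟨_, by simp, hy, hx⟩
  | @cons x x₁ y h q ih =>
    by_cases hxA : x ∈ A
    · exact ⟨x, by simp, hxA, hx⟩
    by_cases hx₁B : x₁ ∈ B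
    · obtain ⟨m, hm, hmAB⟩ := ih hx₁B hy fun z hz ↦ hp z (by simp [hz])
      exact ⟨m, by simp [hm], hmAB⟩
    exfalso
    have hx₁A : x₁ ∈ A := (hp x₁ (by simp)).resolve_right hx₁B
    obtain ⟨c, hcA, hcB⟩ := hAB
    obtain ⟨px, hpx, -⟩ := ht.existsUnique_path c x
    obtain ⟨px₁, hpx₁, -⟩ := ht.existsUnique_path c x₁
    by_cases hxp : x ∈ px₁.support
    · exact hxA (hA px₁ hpx₁ hcA hx₁A x hxp)
    · exact hx₁B (hB px hpx hcB hx x₁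
        (ht.isAcyclic.mem_support_of_ne_mem_support_of_adj_of_isPath hpx hpx₁ h hxp))

theorem IsTree.inter_inter_nonempty (ht : t.IsTree) {A B C : Set T} (hA : t.IsPathClosed A)
    (hB : t.IsPathClosed B) (hC : t.IsPathClosed C) (hAB : (A ∩ B).Nonempty)
    (hAC : (A ∩ C).Nonempty) (hBC : (B ∩ C).Nonempty) : (A ∩ B ∩ C).Nonempty := by
  classical
  obtain ⟨c, hcA, hcB⟩ := hAB
  obtain ⟨b, hbA, hbC⟩ := hAC
  obtain ⟨a, haB, haC⟩ := hBC
  obtain ⟨q, hq⟩ := ((hB.reachIn ht.connected haB hcB).mono Set.subset_union_right).trans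
    ((hA.reachIn ht.connected hcA hbA).mono Set.subset_union_left)
  obtain ⟨m, hm, hmAB⟩ := ht.exists_mem_inter_of_walk hA hB ⟨c, hcA, hcB⟩ q.bypass haB hbA
    fun z hz ↦ hq z (q.support_bypass_subset_support hz)
  exact ⟨m, hmAB, hC _ q.bypass_isPath haC hbC m hm⟩

theorem IsTree.helly (ht : t.IsTree) {ι : Type*} {A : ι → Set T}
    (hA : ∀ i, t.IsPathClosed (A i)) (K : Finset ι)
    (hK : ∀ i ∈ K, ∀ j ∈ K, (A i ∩ A j).Nonempty) : ∃ m, ∀ i ∈ K, m ∈ A i := by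
  classical
  suffices ∀ B : Set T, t.IsPathClosed B → B.Nonempty → (∀ i ∈ K, (B ∩ A i).Nonempty) →
      ∃ m ∈ B, ∀ i ∈ K, m ∈ A i by
    obtain ⟨m, -, hm⟩ := this Set.univ isPathClosed_univ
      ⟨ht.connected.nonempty.some, trivial⟩ fun i hi ↦ by simpa using hK i hi i hi
    exact ⟨m, hm⟩
  induction K using Finset.induction_on with
  | empty => exact fun B _ ⟨m, hm⟩ _ ↦ ⟨m, hm, by simp⟩
  | insert j K hj ih =>
    intro B hB hBne hBA
    simp only [Finset.mem_insert, forall_eq_or_imp] at hK hBA ⊢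
    obtain ⟨m, ⟨hmB, hmj⟩, hmK⟩ := ih (fun i hi k hk ↦ hK.2 i hi |>.2 k hk) (B ∩ A j)
      (hB.inter (hA j)) hBA.1 fun i hi ↦
        ht.inter_inter_nonempty hB (hA j) (hA i) hBA.1 (hBA.2 i hi) (hK.1.2 i hi)
    exact ⟨m, hmB, hmj, hmK⟩

def addLeaf (t : SimpleGraph T) (i₀ : T) : SimpleGraph (Option T) :=
  t.map Function.Embedding.some ⊔ edge none (some i₀)

def addLeafHom (t : SimpleGraph T) (i₀ : T) : t →g t.addLeaf i₀ :=
  (Hom.ofLE le_sup_left).comp (Embedding.map Function.Embedding.some t).toHom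

theorem addLeaf_adj_none (i₀ : T) : (t.addLeaf i₀).Adj none (some i₀) :=
  Or.inr (by simp [edge_adj])

theorem IsTree.addLeaf [Finite T] (ht : t.IsTree) (i₀ : T) : (t.addLeaf i₀).IsTree := by
  rw [isTree_iff_connected_and_card] at ht ⊢
  refine ⟨(connected_iff_exists_forall_reachable _).mpr ⟨some i₀, ?_⟩, ?_⟩
  · rintro (_ | j)
    · exact (addLeaf_adj_none i₀).symm.reachable
    · exact (ht.1.preconnected i₀ j).map (t.addLeafHom i₀)
  · rw [SimpleGraph.addLeaf, edgeSet_sup, edgeSet_map, edgeSet_edge_of_ne (by simp),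
      Finite.card_option, ← ht.2, Set.union_singleton, Nat.card_coe_set_eq, Nat.card_coe_set_eq,
      Set.ncard_insert_of_notMem, Set.ncard_image_of_injective _ (Function.Embedding.injective _)]
    rintro ⟨e, -, he⟩
    induction e using Sym2.ind with
    | _ a b => simp at he

theorem reachIn_addLeaf {i₀ : T} {A : Set (Option T)}
    (hsome : ∀ i k, some i ∈ A → some k ∈ A → t.ReachIn {j | some j ∈ A} i k)
    (hnone : none ∈ A → ∀ i, some i ∈ A → some i₀ ∈ A) :
    ∀ a ∈ A, ∀ b ∈ A, (t.addLeaf i₀).ReachIn A a b := by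
  have hmap {i k : T} (hi : some i ∈ A) (hk : some k ∈ A) :
      (t.addLeaf i₀).ReachIn A (some i) (some k) :=
    (hsome i k hi hk).map (t.addLeafHom i₀) fun _ hz ↦ hz
  have hleaf {k : T} (hn : none ∈ A) (hk : some k ∈ A) : (t.addLeaf i₀).ReachIn A none (some k) :=
    have hi₀ := hnone hn k hk
    ((addLeaf_adj_none i₀).reachIn hn hi₀).trans (hmap hi₀ hk)
  rintro (_ | i) hi (_ | k) hk
  · exact .refl hi
  · exact hleaf hi hk
  · exact (hleaf hk hi).symm
  · exact hmap hi hk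

end SimpleGraph

section TreeDecomposition

variable {V : Type} {g : SimpleGraph V}

structure IsTDOn (g : SimpleGraph V) (s : Set V) (d : TreeDecomp V) : Prop where
  exists_mem_bag : ∀ v ∈ s, ∃ i, v ∈ d.β i
  exists_adj_mem_bag : ∀ u ∈ s, ∀ v ∈ s, g.Adj u v → ∃ i, u ∈ d.β i ∧ v ∈ d.β i
  isPathClosed : ∀ v, d.tree.IsPathClosed {i | v ∈ d.β i}

theorem isTD_iff_isTDOn_univ {d : TreeDecomp V} : IsTD g d ↔ IsTDOn g Set.univ d := by
  constructor
  · rintro ⟨hcover, hadj, hcoh⟩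
    exact ⟨fun v _ ↦ hcover v, fun u _ v _ ↦ hadj u v,
      fun v i k p hp hi hk j hj ↦ hcoh i j k p hp hj ⟨hi, hk⟩⟩
  · rintro ⟨hcover, hadj, hcoh⟩
    exact ⟨fun v ↦ hcover v trivial, fun u v ↦ hadj u trivial v trivial,
      fun i j k p hp hj v hv ↦ hcoh v p hp hv.1 hv.2 j hj⟩

theorem IsTDOn.exists_subset_bag {s : Set V} {d : TreeDecomp V} (hd : IsTDOn g s d)
    {C : Set V} (hC : g.IsClique C) (hCs : C ⊆ s) (hfin : C.Finite) : ∃ i, C ⊆ d.β i := by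
  obtain ⟨i, hi⟩ := d.isTree.helly hd.isPathClosed hfin.toFinset fun u hu v hv ↦ by
    rw [Set.Finite.mem_toFinset] at hu hv
    obtain rfl | huv := eq_or_ne u v
    · obtain ⟨i, hi⟩ := hd.exists_mem_bag u (hCs hu)
      exact ⟨i, hi, hi⟩
    · exact hd.exists_adj_mem_bag u (hCs hu) v (hCs hv) (hC hu hv huv)
  exact ⟨i, fun v hv ↦ hi v (hfin.mem_toFinset.mpr hv)⟩

/-- Bags equal to `N` are enlarged as well, so that they remain maximal cliques. -/
def TreeDecomp.addLeaf (d : TreeDecomp V) (i₀ : d.T) (N : Set V) (v : V) : TreeDecomp V where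
  T := Option d.T
  tFinite := have := d.tFinite; inferInstance
  tree := d.tree.addLeaf i₀
  isTree := have := d.tFinite; d.isTree.addLeaf i₀
  β o := o.elim (insert v N) fun i ↦ if d.β i = N then insert v N else d.β i

namespace TreeDecomp

variable {d : TreeDecomp V} {i₀ : d.T} {N : Set V} {v : V}

theorem subset_addLeaf_β_some (i : d.T) : d.β i ⊆ (d.addLeaf i₀ N v).β (some i) := by
  change d.β i ⊆ if d.β i = N then insert v N else d.β i
  split_ifs with h
  · exact h ▸ Set.subset_insert v _
  · exact le_rfl

theorem mem_addLeaf_β_some_of_ne {i : d.T} {x : V} (hx : x ≠ v) :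
    x ∈ (d.addLeaf i₀ N v).β (some i) ↔ x ∈ d.β i := by
  change x ∈ (if d.β i = N then insert v N else d.β i) ↔ _
  split_ifs with h <;> simp [h, hx]

theorem self_mem_addLeaf_β_some {i : d.T} (hi : v ∉ d.β i) :
    v ∈ (d.addLeaf i₀ N v).β (some i) ↔ d.β i = N := by
  change v ∈ (if d.β i = N then insert v N else d.β i) ↔ _
  split_ifs with h <;> simp [h, hi]

end TreeDecomp

open TreeDecomp in
theorem IsTDOn.addLeaf {s : Set V} {v : V} {d : TreeDecomp V} {i₀ : d.T}
    (hd : IsTDOn g (s \ {v}) d)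
    (hmax : ∀ i, Maximal (fun C ↦ g.IsClique C ∧ C ⊆ s \ {v}) (d.β i))
    (hi₀ : s ∩ g.neighborSet v ⊆ d.β i₀) :
    IsTDOn g s (d.addLeaf i₀ (s ∩ g.neighborSet v) v) := by
  set N := s ∩ g.neighborSet v
  have hvβ (i : d.T) : v ∉ d.β i := fun h ↦ ((hmax i).prop.2 h).2 rfl
  have hN {i j : d.T} (hi : d.β i = N) (hj : N ⊆ d.β j) : d.β j = N :=
    ((hmax i).eq_of_subset (hmax j).prop (hi ▸ hj)).symm.trans hi
  refine ⟨fun u hu ↦ ?_, fun u hu w hw huw ↦ ?_, fun x ↦ ?_⟩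
  · obtain rfl | huv := eq_or_ne u v
    · exact ⟨none, .inl rfl⟩
    · obtain ⟨i, hi⟩ := hd.exists_mem_bag u ⟨hu, huv⟩
      exact ⟨some i, subset_addLeaf_β_some i hi⟩
  · obtain rfl | huv := eq_or_ne u v
    · exact ⟨none, .inl rfl, .inr ⟨hw, huw⟩⟩
    obtain rfl | hwv := eq_or_ne w v
    · exact ⟨none, .inr ⟨hu, huw.symm⟩, .inl rfl⟩
    obtain ⟨i, hui, hwi⟩ := hd.exists_adj_mem_bag u ⟨hu, huv⟩ w ⟨hw, hwv⟩ huw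
    exact ⟨some i, subset_addLeaf_β_some i hui, subset_addLeaf_β_some i hwi⟩
  have hself (j : d.T) : v ∈ (d.addLeaf i₀ N v).β (some j) ↔ d.β j = N :=
    self_mem_addLeaf_β_some (hvβ j)
  have hother {y : V} (hyv : y ≠ v) (j : d.T) : y ∈ (d.addLeaf i₀ N v).β (some j) ↔ y ∈ d.β j :=
    mem_addLeaf_β_some_of_ne hyv
  refine (d.addLeaf i₀ N v).isTree.isAcyclic.isPathClosed_of_reachIn (reachIn_addLeaf ?_ ?_)
  · intro i k hi hk
    obtain rfl | hxv := eq_or_ne x v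
    · have hpc : d.tree.IsPathClosed {j | d.β j = N} := fun i k p hp hi hk j hj ↦
        hN hi fun y hy ↦ hd.isPathClosed y p hp (show y ∈ d.β i from hi ▸ hy)
          (show y ∈ d.β k from hk ▸ hy) j hj
      exact (hpc.reachIn d.isTree.connected ((hself i).mp hi) ((hself k).mp hk)).mono
        fun j hj ↦ (hself j).mpr hj
    · exact ((hd.isPathClosed x).reachIn d.isTree.connected ((hother hxv i).mp hi)
        ((hother hxv k).mp hk)).mono fun j hj ↦ (hother hxv j).mpr hj
  · intro hx i hi
    obtain rfl | hxv := eq_or_ne x v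
    · exact (hself i₀).mpr (hN ((hself i).mp hi) hi₀)
    · exact (hother hxv i₀).mpr (hi₀ (hx.resolve_left hxv))

theorem maximal_addLeaf_β {s : Set V} {v : V} {d : TreeDecomp V} {i₀ : d.T}
    (hmax : ∀ i, Maximal (fun C ↦ g.IsClique C ∧ C ⊆ s \ {v}) (d.β i))
    (hsimp : g.IsSimplicialIn s v) (hv : v ∈ s) (o : Option d.T) :
    Maximal (fun C ↦ g.IsClique C ∧ C ⊆ s) ((d.addLeaf i₀ (s ∩ g.neighborSet v) v).β o) := by
  cases o with
  | none => exact hsimp.maximal_insert hv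
  | some i =>
    change Maximal _ (if d.β i = s ∩ g.neighborSet v then _ else d.β i)
    split_ifs with h
    · exact hsimp.maximal_insert hv
    · exact hsimp.maximal_of_maximal_diff (hmax i) h

theorem IsChordal.exists_cliqueTree [Finite V] (hg : IsChordal g) (s : Set V) :
    ∃ d : TreeDecomp V, IsTDOn g s d ∧ ∀ i, Maximal (fun C ↦ g.IsClique C ∧ C ⊆ s) (d.β i) := by
  induction s using WellFoundedLT.induction with
  | _ s ih =>
  obtain rfl | hs := s.eq_empty_or_nonempty
  · exact ⟨⟨Unit, inferInstance, ⊥, .of_subsingleton, fun _ ↦ ∅⟩,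
      ⟨by simp, by simp, fun _ _ _ _ _ h ↦ h.elim⟩,
      fun _ ↦ ⟨⟨isClique_empty, le_rfl⟩, fun _ h _ ↦ h.2⟩⟩
  obtain ⟨v, hv, hsimp⟩ := hg.exists_isSimplicialIn hs
  obtain ⟨d, hd, hmax⟩ := ih (s \ {v}) (Set.sdiff_singleton_ssubset.mpr hv)
  obtain ⟨i₀, hi₀⟩ := hd.exists_subset_bag hsimp
    (fun u hu ↦ ⟨hu.1, fun h ↦ g.loopless.irrefl v (h ▸ hu.2)⟩) (Set.toFinite _)
  exact ⟨_, hd.addLeaf hmax hi₀, maximal_addLeaf_β hmax hsimp hv⟩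

end TreeDecomposition

/-- The bags of a proper tree decomposition of a chordal graph are exactly its
maximal cliques. -/
theorem proper_td_of_chordal_bags {V : Type} [Fintype V] (g : SimpleGraph V)
    (hg : IsChordal g) (d : TreeDecomp V) (hd : IsProperTD g d) :
    d.bags = MaxClq g := by
  obtain ⟨hdTD, hproper⟩ := hd
  have hdOn := isTD_iff_isTDOn_univ.mp hdTD
  obtain ⟨c, hc, hmax⟩ := hg.exists_cliqueTree Set.univ
  have hsub : Subsumes c d := by
    rintro _ ⟨i, rfl⟩
    obtain ⟨j, hj⟩ := hdOn.exists_subset_bag (hmax i).prop.1 (Set.subset_univ _) (Set.toFinite _)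
    exact ⟨d.β j, ⟨j, rfl⟩, hj⟩
  have hbags : d.bags ⊆ c.bags :=
    not_not.mp fun h ↦ hproper c (isTD_iff_isTDOn_univ.mpr hc) ⟨hsub, h⟩
  refine Set.Subset.antisymm (fun _ hC ↦ ?_) fun C hC ↦ ?_
  · obtain ⟨i, rfl⟩ := hbags hC
    exact ⟨(hmax i).prop.1, fun C hC hsub ↦ (hmax i).eq_of_subset ⟨hC, Set.subset_univ C⟩ hsub⟩
  · obtain ⟨j, hj⟩ := hdOn.exists_subset_bag hC.1 (Set.subset_univ _) (Set.toFinite _)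
    obtain ⟨i, hi⟩ := hbags ⟨j, rfl⟩
    rw [hC.2 _ (hi ▸ (hmax i).prop.1) hj]
    exact ⟨j, rfl⟩
end

section
/- Let g be a finite simple graph, let φ be a set of pairwise parallel minimal separators of g, and let h be a minimal triangulation of the graph g_[φ]. Then h is a minimal triangulation of g, and MinSep(h) is a maximal set of pairwise parallel minimal separators of g that contains φ. -/
open SimpleGraph

/-- `S` is a `(u,v)`-separator of `g`: `u` and `v` lie in distinct connected
components of `g` with the vertices of `S` deleted. -/
def IsSep {V : Type} (g : SimpleGraph V) (u v : V) (S : Set V) : Prop :=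
  ∃ (hu : u ∈ Sᶜ) (hv : v ∈ Sᶜ),
    ¬ (g.induce Sᶜ).Reachable ⟨u, hu⟩ ⟨v, hv⟩

/-- `S` is a minimal `(u,v)`-separator of `g`. -/
def IsMinSepPair {V : Type} (g : SimpleGraph V) (u v : V) (S : Set V) : Prop :=
  IsSep g u v S ∧ ∀ S' : Set V, S' ⊂ S → ¬ IsSep g u v S'

/-- The set of minimal separators of `g`. -/
def MinSep {V : Type} (g : SimpleGraph V) : Set (Set V) :=
  {S | ∃ u v : V, IsMinSepPair g u v S}

/-- `S` crosses `T`. -/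
def Crosses {V : Type} (g : SimpleGraph V) (S T : Set V) : Prop :=
  ∃ u ∈ T, ∃ v ∈ T, IsSep g u v S

/-- `φ` is a set of pairwise parallel (non-crossing) minimal separators of `g`. -/
def PairwiseParallel {V : Type} (g : SimpleGraph V) (φ : Set (Set V)) : Prop :=
  φ ⊆ MinSep g ∧ φ.Pairwise fun S T => ¬ Crosses g S T

/-- `φ` is a maximal set of pairwise parallel minimal separators of `g`. -/
def MaxPairwiseParallel {V : Type} (g : SimpleGraph V) (φ : Set (Set V)) : Prop :=
  PairwiseParallel g φ ∧ ∀ ψ : Set (Set V), PairwiseParallel g ψ → φ ⊆ ψ → φ = ψ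

/-- `g_[φ]`: the graph obtained from `g` by saturating every member of `φ`. -/
def satSet {V : Type} (g : SimpleGraph V) (φ : Set (Set V)) : SimpleGraph V where
  Adj u v := g.Adj u v ∨ (u ≠ v ∧ ∃ S ∈ φ, u ∈ S ∧ v ∈ S)
  symm := by
    constructor
    intro u v h
    rcases h with h | ⟨hne, S, hS, hu, hv⟩
    · exact Or.inl h.symm
    · exact Or.inr ⟨hne.symm, S, hS, hv, hu⟩
  loopless := by
    constructor
    intro u h
    rcases h with h | ⟨hne, _⟩
    · exact g.loopless.irrefl u h
    · exact hne rfl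

/-- The neighborhood of a set `U` of vertices: vertices outside `U` adjacent to `U`. -/
def nbhd {V : Type} (g : SimpleGraph V) (U : Set V) : Set V :=
  {v | v ∉ U ∧ ∃ u ∈ U, g.Adj u v}

/-- `c` is (the vertex set of) a connected component of `g − S`. -/
def IsCompOf {V : Type} (g : SimpleGraph V) (S : Set V) (c : Set V) : Prop :=
  c ⊆ Sᶜ ∧ (g.induce c).Connected ∧
  ∀ u ∈ c, ∀ v : V, v ∉ S → g.Adj u v → v ∈ c

/-!
Write `ReachAvoiding g S u v` when `u` and `v` are joined by a walk of `g - S`. If `h` is a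
minimal triangulation of `k` and `S` is a clique of `h`, then `h - S` and `k - S` have the same
components: deleting the edges of `h` between different components of `k - S` keeps the graph
chordal, so by minimality there are none. Minimal separators of chordal graphs are cliques
(Dirac), and for a minimal separator `S` of `g`, "`S` does not cross `T`" implies "`T` does not
cross `S`". With `k = g_[φ]`, these show that `h - T` and `g - T` have the same components for
every clique `T` of `h`, in particular for `T ∈ φ` and `T ∈ MinSep h`; hence
`φ ⊆ MinSep h ⊆ MinSep g`, `MinSep h` is pairwise parallel, and a chordal graph strictly
between `g` and `h` would contain `g_[φ]`, so `h` is a minimal triangulation of `g`.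

For maximality, every fill edge `xy` of a minimal triangulation `h` lies in a minimal separator
of `h`: a chordless cycle of `h - xy` splits at `x` and `y` into two arcs of length two, so `xy`
is the diagonal of a square `x a y b` of `h` with `a`, `b` non-adjacent, and every minimal
`(a, b)`-separator contains `x` and `y`. A minimal separator `R` of `g` parallel to all of
`MinSep h` (hence to `φ`) is therefore not crossed by any edge of `h`, so it separates in `h`
exactly as in `g`, and `R ∈ MinSep h`.
-/

section Reachability

variable {V : Type} {g h : SimpleGraph V} {S T : Set V} {u v w : V}

def ReachAvoiding (g : SimpleGraph V) (S : Set V) (u v : V) : Prop :=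
  ∃ p : g.Walk u v, ∀ x ∈ p.support, x ∉ S

namespace ReachAvoiding

lemma left_notMem (huv : ReachAvoiding g S u v) : u ∉ S :=
  let ⟨p, hp⟩ := huv; hp u p.start_mem_support

lemma right_notMem (huv : ReachAvoiding g S u v) : v ∉ S :=
  let ⟨p, hp⟩ := huv; hp v p.end_mem_support

protected lemma refl (hu : u ∉ S) : ReachAvoiding g S u u :=
  ⟨.nil, by simpa using hu⟩

protected lemma symm (huv : ReachAvoiding g S u v) : ReachAvoiding g S v u :=
  let ⟨p, hp⟩ := huv; ⟨p.reverse, by simpa using hp⟩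

protected lemma trans (huv : ReachAvoiding g S u v) (hvw : ReachAvoiding g S v w) :
    ReachAvoiding g S u w := by
  obtain ⟨p, hp⟩ := huv
  obtain ⟨q, hq⟩ := hvw
  refine ⟨p.append q, fun x hx => ?_⟩
  rcases (Walk.mem_support_append_iff _ _).mp hx with hx | hx
  exacts [hp x hx, hq x hx]

lemma of_adj (hadj : g.Adj u v) (hu : u ∉ S) (hv : v ∉ S) : ReachAvoiding g S u v :=
  ⟨hadj.toWalk, by simp [hu, hv]⟩

lemma mono (hle : g ≤ h) (huv : ReachAvoiding g S u v) : ReachAvoiding h S u v :=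
  let ⟨p, hp⟩ := huv; ⟨p.mapLe hle, by simpa [Walk.support_mapLe_eq_support] using hp⟩

lemma anti (hTS : T ⊆ S) (huv : ReachAvoiding g S u v) : ReachAvoiding g T u v :=
  let ⟨p, hp⟩ := huv; ⟨p, fun x hx hxT => hp x hx (hTS hxT)⟩

lemma of_mem_support {p : g.Walk u v} (hp : ∀ x ∈ p.support, x ∉ S) (hw : w ∈ p.support) :
    ReachAvoiding g S u w := by
  classical
  exact ⟨p.takeUntil w hw, fun x hx => hp x (p.support_takeUntil_subset_support hw hx)⟩

lemma lift (hadj : ∀ a b, h.Adj a b → a ∉ S → b ∉ S → ReachAvoiding g S a b)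
    (huv : ReachAvoiding h S u v) : ReachAvoiding g S u v := by
  obtain ⟨p, hp⟩ := huv
  induction p with
  | nil => exact .refl (by simpa using hp)
  | cons hab q ih =>
    simp only [Walk.support_cons, List.mem_cons, forall_eq_or_imp] at hp
    exact (hadj _ _ hab hp.1 (hp.2 _ q.start_mem_support)).trans (ih hp.2)

end ReachAvoiding

lemma reachAvoiding_iff_of_forall_adj (hle : g ≤ h)
    (hadj : ∀ a b, h.Adj a b → a ∉ S → b ∉ S → ReachAvoiding g S a b) :
    ReachAvoiding h S u v ↔ ReachAvoiding g S u v :=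
  ⟨.lift hadj, .mono hle⟩

lemma isSep_iff : IsSep g u v S ↔ u ∉ S ∧ v ∉ S ∧ ¬ ReachAvoiding g S u v := by
  refine ⟨fun ⟨hu, hv, hr⟩ => ⟨hu, hv, fun ⟨p, hp⟩ => hr ⟨p.induce Sᶜ hp⟩⟩,
    fun ⟨hu, hv, hr⟩ => ⟨hu, hv, fun ⟨q⟩ => hr ?_⟩⟩
  let p : g.Walk u v := q.map (Embedding.induce Sᶜ).toHom
  refine ⟨p, fun x hx => ?_⟩
  have hx' : x ∈ (q.map (Embedding.induce Sᶜ).toHom).support := hx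
  rw [Walk.support_map, List.mem_map] at hx'
  obtain ⟨y, -, rfl⟩ := hx'
  exact y.2

lemma IsSep.mem_of_adj_of_adj (hS : IsSep g u v S) (hu : g.Adj u w) (hv : g.Adj w v) : w ∈ S := by
  obtain ⟨hu', hv', hr⟩ := isSep_iff.mp hS
  by_contra hw
  exact hr ((ReachAvoiding.of_adj hu hu' hw).trans (.of_adj hv hw hv'))

lemma not_crosses_iff :
    ¬ Crosses g S T ↔ ∀ x ∈ T, ∀ y ∈ T, x ∉ S → y ∉ S → ReachAvoiding g S x y := by
  simp only [Crosses, isSep_iff]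
  grind

lemma not_crosses_self : ¬ Crosses g S S :=
  not_crosses_iff.mpr fun _ hx _ _ hxS _ => absurd hx hxS

end Reachability

section MinimalSeparators

variable {V : Type} {g h : SimpleGraph V} {S T : Set V} {u v s : V}

lemma exists_adj_reachAvoiding_of_mem_support {p : g.Walk u v}
    (hp : ∀ x ∈ p.support, x ∈ S → x = s) (hu : u ∉ S) (hsS : s ∈ S) (hs : s ∈ p.support) :
    ∃ a, g.Adj s a ∧ ReachAvoiding g S u a := by
  induction p with
  | nil => exact absurd (List.mem_singleton.mp hs ▸ hsS) hu
  | @cons u w v hadj q ih =>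
    simp only [Walk.support_cons, List.mem_cons, forall_eq_or_imp] at hp hs
    by_cases hws : w = s
    · exact ⟨u, hws ▸ hadj.symm, .refl hu⟩
    have hw : w ∉ S := fun hwS => hws (hp.2 w q.start_mem_support hwS)
    obtain ⟨a, hsa, hwa⟩ := ih hp.2 hw (hs.resolve_left fun hsu => hu (hsu ▸ hsS))
    exact ⟨a, hsa, (ReachAvoiding.of_adj hadj hu hw).trans hwa⟩

lemma isMinSepPair_iff : IsMinSepPair g u v S ↔ IsSep g u v S ∧ ∀ s ∈ S,
    (∃ a, g.Adj s a ∧ ReachAvoiding g S u a) ∧ (∃ b, g.Adj s b ∧ ReachAvoiding g S v b) := by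
  refine ⟨fun ⟨hsep, hmin⟩ => ⟨hsep, fun s hs => ?_⟩, fun ⟨hsep, hfull⟩ => ⟨hsep, ?_⟩⟩
  · obtain ⟨hu, hv, hnr⟩ := isSep_iff.mp hsep
    have hlt : S \ {s} ⊂ S := Set.sdiff_singleton_ssubset.mpr hs
    obtain ⟨p, hp⟩ : ReachAvoiding g (S \ {s}) u v := by
      by_contra hr
      exact hmin _ hlt (isSep_iff.mpr ⟨fun hu' => hu hu'.1, fun hv' => hv hv'.1, hr⟩)
    have hsp : s ∈ p.support := by
      by_contra hsp
      exact hnr ⟨p, fun x hx hxS => hp x hx ⟨hxS, fun hxs => hsp (hxs ▸ hx)⟩⟩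
    have hp' : ∀ x ∈ p.support, x ∈ S → x = s := fun x hx hxS => by
      by_contra hxs
      exact hp x hx ⟨hxS, hxs⟩
    exact ⟨exists_adj_reachAvoiding_of_mem_support hp' hu hs hsp,
      exists_adj_reachAvoiding_of_mem_support (p := p.reverse) (by simpa using hp') hv hs
        (by simpa using hsp)⟩
  · intro S' hlt hsep'
    obtain ⟨s, hs, hs'⟩ := Set.exists_of_ssubset hlt
    obtain ⟨⟨a, hsa, hua⟩, ⟨b, hsb, hvb⟩⟩ := hfull s hs
    obtain ⟨-, -, hnr⟩ := isSep_iff.mp hsep'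
    have hua' := hua.anti hlt.subset
    have hvb' := hvb.anti hlt.subset
    exact hnr (hua'.trans <| (ReachAvoiding.of_adj hsa.symm hua'.right_notMem hs').trans <|
      (ReachAvoiding.of_adj hsb hs' hvb'.right_notMem).trans hvb'.symm)

lemma IsMinSepPair.of_le (hle : g ≤ h) (hS : IsMinSepPair g u v S)
    (hnr : ¬ ReachAvoiding h S u v) : IsMinSepPair h u v S := by
  obtain ⟨hsep, hfull⟩ := isMinSepPair_iff.mp hS
  obtain ⟨hu, hv, -⟩ := isSep_iff.mp hsep
  refine isMinSepPair_iff.mpr ⟨isSep_iff.mpr ⟨hu, hv, hnr⟩, fun s hs => ?_⟩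
  obtain ⟨⟨a, hsa, hua⟩, ⟨b, hsb, hvb⟩⟩ := hfull s hs
  exact ⟨⟨a, hle hsa, hua.mono hle⟩, ⟨b, hle hsb, hvb.mono hle⟩⟩

lemma isMinSepPair_congr
    (hreach : ∀ S' ⊆ S, ∀ a b, ReachAvoiding h S' a b ↔ ReachAvoiding g S' a b) :
    IsMinSepPair h u v S ↔ IsMinSepPair g u v S := by
  have hsep : ∀ S' ⊆ S, IsSep h u v S' ↔ IsSep g u v S' := fun S' hS' => by
    simp only [isSep_iff, hreach S' hS']
  exact and_congr (hsep S subset_rfl)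
    (forall₂_congr fun S' hS' => not_congr (hsep S' hS'.subset))

lemma exists_isMinSepPair_of_not_adj [Finite V] (hne : u ≠ v) (hnadj : ¬ g.Adj u v) :
    ∃ S, IsMinSepPair g u v S := by
  have hsep : IsSep g u v {u, v}ᶜ := by
    refine isSep_iff.mpr ⟨by simp, by simp, fun ⟨p, hp⟩ => ?_⟩
    cases p with
    | nil => exact hne rfl
    | @cons _ w _ huw q =>
      have hw : w = u ∨ w = v := by simpa [or_iff_not_imp_left] using hp w (by simp)
      rcases hw with rfl | rfl
      exacts [huw.ne rfl, hnadj huw]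
  obtain ⟨S, -, hS⟩ := exists_minimal_le_of_wellFoundedLT (IsSep g u v) _ hsep
  exact ⟨S, hS.prop, fun S' hlt => hS.not_prop_of_lt hlt⟩

lemma not_crosses_symm (hS : S ∈ MinSep g) (hST : ¬ Crosses g S T) : ¬ Crosses g T S := by
  obtain ⟨u, v, huv⟩ := hS
  obtain ⟨hsep, hfull⟩ := isMinSepPair_iff.mp huv
  obtain ⟨-, -, hnr⟩ := isSep_iff.mp hsep
  rw [not_crosses_iff] at hST ⊢
  -- one of the two full components of `g - S` misses `T`
  obtain ⟨z, hz, hzT⟩ : ∃ z, (∀ s ∈ S, ∃ a, g.Adj s a ∧ ReachAvoiding g S z a) ∧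
      ∀ t ∈ T, ¬ ReachAvoiding g S z t := by
    by_cases! hu : ∀ t ∈ T, ¬ ReachAvoiding g S u t
    · exact ⟨u, fun s hs => (hfull s hs).1, hu⟩
    obtain ⟨t₀, ht₀, hut₀⟩ := hu
    refine ⟨v, fun s hs => (hfull s hs).2, fun t ht hvt => hnr ?_⟩
    exact hut₀.trans ((hST t ht t₀ ht₀ hvt.right_notMem hut₀.right_notMem).symm.trans hvt.symm)
  have hreach : ∀ x ∈ S, x ∉ T → ReachAvoiding g T x z := by
    intro x hx hxT
    obtain ⟨a, hxa, hza⟩ := hz x hx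
    obtain ⟨p, hp⟩ := hza
    have hpT : ∀ w ∈ p.support, w ∉ T := fun w hw hwT =>
      hzT w hwT (.of_mem_support hp hw)
    have hza' : ReachAvoiding g T z a := ⟨p, hpT⟩
    exact (ReachAvoiding.of_adj hxa hxT hza'.right_notMem).trans hza'.symm
  exact fun x hx y hy hxT hyT => (hreach x hx hxT).trans (hreach y hy hyT).symm

end MinimalSeparators

section Walks

variable {V : Type} {G : SimpleGraph V} {a b x y z v α ω : V}

lemma start_notMem_support_tail_of_isPath {p : G.Walk x y} (hp : p.IsPath) :
    x ∉ p.support.tail := by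
  have hnodup := hp.support_nodup
  rw [← p.cons_tail_support] at hnodup
  exact (List.nodup_cons.mp hnodup).1

lemma two_le_length_of_not_adj (p : G.Walk x y) (hxy : x ≠ y) (hnadj : ¬ G.Adj x y) :
    2 ≤ p.length := by
  rcases p with _ | ⟨hxz, _ | ⟨_, _⟩⟩
  · exact absurd rfl hxy
  · exact absurd hxz hnadj
  · simp

lemma exists_eq_cons_cons_nil {p : G.Walk x y} (hlen : p.length ≤ 2) (hxy : x ≠ y)
    (hnot : s(x, y) ∉ p.edges) :
    ∃ a, ∃ (hxa : G.Adj x a) (hay : G.Adj a y), p = .cons hxa (.cons hay .nil) := by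
  rcases p with _ | ⟨hxz, _ | ⟨hza, _ | ⟨_, _⟩⟩⟩
  · exact absurd rfl hxy
  · simp at hnot
  · exact ⟨_, hxz, hza, rfl⟩
  · simp at hlen

lemma isCycle_append_reverse {p q : G.Walk x y} (hp : p.IsPath) (hq : q.IsPath)
    (hpq : ∀ z ∈ p.support, z ∈ q.support → z = x ∨ z = y) (hlen : 2 ≤ p.length) :
    (p.append q.reverse).IsCycle := by
  refine hp.isCycle_append hq.reverse (fun z hzp hzq => ?_) (.inl hlen)
  rcases hpq z (List.mem_of_mem_tail hzp) (by simpa using List.mem_of_mem_tail hzq) with rfl | rfl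
  exacts [start_notMem_support_tail_of_isPath hp hzp,
    start_notMem_support_tail_of_isPath hq.reverse hzq]

lemma exists_shorter_walk_of_adj_start (hxz : G.Adj x z) (r : G.Walk z y) (hxb : G.Adj x b)
    (hb : b ∈ r.support) (hbz : b ≠ z) :
    ∃ q : G.Walk x y, q.support ⊆ (Walk.cons hxz r).support ∧
      q.length < (Walk.cons hxz r).length := by
  classical
  refine ⟨.cons hxb (r.dropUntil b hb), ?_, ?_⟩
  · simp only [Walk.support_cons]
    exact List.cons_subset_cons x (r.support_dropUntil_subset_support hb)
  · simpa using r.length_dropUntil_lt_length hb hbz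

lemma exists_shorter_walk_of_adj (hab : G.Adj a b) {p : G.Walk x y} (ha : a ∈ p.support)
    (hb : b ∈ p.support) (hnot : s(a, b) ∉ p.edges) :
    ∃ q : G.Walk x y, q.support ⊆ p.support ∧ q.length < p.length := by
  induction p with
  | nil => exact absurd ((List.mem_singleton.mp ha).trans (List.mem_singleton.mp hb).symm) hab.ne
  | @cons x z y hxz r ih =>
    simp only [Walk.support_cons, List.mem_cons, Walk.edges_cons, not_or] at ha hb hnot
    rcases ha with rfl | ha
    · refine exists_shorter_walk_of_adj_start hxz r hab (hb.resolve_left hab.ne.symm) ?_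
      rintro rfl; exact hnot.1 rfl
    rcases hb with rfl | hb
    · refine exists_shorter_walk_of_adj_start hxz r hab.symm ha ?_
      rintro rfl; exact hnot.1 Sym2.eq_swap
    obtain ⟨q, hsub, hlt⟩ := ih ha hb hnot.2
    exact ⟨.cons hxz q, by simpa using List.cons_subset_cons x hsub, by simpa using hlt⟩

lemma exists_isPath_isChordless {Q : Set V} (p : G.Walk x y) (hp : ∀ w ∈ p.support, w ∈ Q) :
    ∃ q : G.Walk x y, q.IsPath ∧ q.IsChordless ∧ ∀ w ∈ q.support, w ∈ Q := by
  classical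
  induction hn : p.length using Nat.strong_induction_on generalizing p with
  | _ n ih =>
    by_cases hlt : p.bypass.length < p.length
    · exact ih _ (hn ▸ hlt) p.bypass (fun w hw => hp w (p.support_bypass_subset_support hw)) rfl
    have hpath : p.IsPath :=
      p.bypass_eq_self_of_length_le_length_bypass (not_lt.mp hlt) ▸ p.bypass_isPath
    by_cases hc : p.IsChordless
    · exact ⟨p, hpath, hc, hp⟩
    obtain ⟨e, he⟩ : ∃ e, p.IsChord e := by simpa [Walk.IsChordless] using hc
    induction e using Sym2.ind with
    | _ a b =>
      obtain ⟨hab, hnot, ha, hb⟩ := Walk.isChord_sym2Mk.mp he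
      obtain ⟨q, hsub, hlt⟩ := exists_shorter_walk_of_adj hab ha hb hnot
      exact ih _ (hn ▸ hlt) q (fun w hw => hp w (hsub hw)) rfl

lemma exists_arcs_of_isCycle {c : G.Walk v v} (hc : c.IsCycle) (hα : α ∈ c.support)
    (hω : ω ∈ c.support) (hne : α ≠ ω) :
    ∃ p q : G.Walk α ω, p.IsPath ∧ q.IsPath ∧
      (∀ z, z ∈ c.support ↔ z ∈ p.support ∨ z ∈ q.support) ∧
      (∀ e, e ∈ c.edges ↔ e ∈ p.edges ∨ e ∈ q.edges) ∧
      ∀ z ∈ p.support, z ∈ q.support → z = α ∨ z = ω := by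
  classical
  set c' := c.rotate α hα
  have hc' : c'.IsCycle := hc.rotate hα
  have hω' : ω ∈ c'.support := by simpa [c'] using hω
  set p := c'.takeUntil ω hω'
  set r := c'.dropUntil ω hω'
  have hpr : (p.append r).IsCycle := by rwa [c'.take_spec hω']
  have hnodup := hpr.support_nodup
  rw [Walk.tail_support_append] at hnodup
  refine ⟨p, r.reverse, hc'.isPath_takeUntil hω',
    (hpr.isPath_of_append_right (Walk.not_nil_of_ne hne)).reverse, fun z => ?_, fun e => ?_, ?_⟩
  · rw [← Walk.mem_support_rotate_iff c α hα]
    change z ∈ c'.support ↔ _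
    rw [← c'.take_spec hω', Walk.mem_support_append_iff]
    simp [p, r]
  · rw [← (c.rotate_edges α hα).mem_iff]
    change e ∈ c'.edges ↔ _
    rw [← c'.take_spec hω', Walk.edges_append]
    simp [p, r]
  · intro z hzp hzq
    rw [Walk.support_reverse, List.mem_reverse] at hzq
    rcases p.mem_support_iff.mp hzp with rfl | hzp
    · exact .inl rfl
    rcases r.mem_support_iff.mp hzq with rfl | hzq
    · exact .inr rfl
    exact absurd hzq (List.disjoint_of_nodup_append hnodup hzp)

end Walks

section Chordal

variable {V : Type} {h : SimpleGraph V} {S : Set V} {u v x y z : V}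

lemma exists_isPath_isChordless_through_component (hx : x ∈ S) (hy : y ∈ S)
    (hz : ∀ s ∈ S, ∃ a, h.Adj s a ∧ ReachAvoiding h S z a) :
    ∃ p : h.Walk x y, p.IsPath ∧ p.IsChordless ∧
      ∀ w ∈ p.support, w = x ∨ w = y ∨ ReachAvoiding h S z w := by
  classical
  obtain ⟨a, hxa, hza⟩ := hz x hx
  obtain ⟨b, hyb, hzb⟩ := hz y hy
  obtain ⟨r, hr⟩ := hza.symm.trans hzb
  refine exists_isPath_isChordless (Walk.cons hxa (r.concat hyb.symm)) fun w hw => ?_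
  simp only [Walk.support_cons, Walk.support_concat, List.mem_cons, List.mem_append,
    List.not_mem_nil, or_false] at hw
  rcases hw with rfl | hw | rfl
  · exact .inl rfl
  · exact .inr (.inr (hza.trans (.of_mem_support hr hw)))
  · exact .inr (.inl rfl)

theorem IsChordal.isClique_of_isMinSepPair (hch : IsChordal h) (hS : IsMinSepPair h u v S) :
    h.IsClique S := by
  classical
  intro x hx y hy hxy
  by_contra hnadj
  obtain ⟨hsep, hfull⟩ := isMinSepPair_iff.mp hS
  obtain ⟨-, -, hnr⟩ := isSep_iff.mp hsep
  obtain ⟨p, hp, hpc, hpu⟩ :=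
    exists_isPath_isChordless_through_component hx hy fun s hs => (hfull s hs).1
  obtain ⟨q, hq, hqc, hqv⟩ :=
    exists_isPath_isChordless_through_component hx hy fun s hs => (hfull s hs).2
  -- the interiors of `p` and `q` lie in different components of `h - S`, so a chord of the
  -- cycle `p q⁻¹` would be a chord of `p` or of `q`
  have hcross : ∀ α ∈ p.support, ∀ ω ∈ q.support, h.Adj α ω →
      α ∈ q.support ∨ ω ∈ p.support := by
    intro α hα ω hω hadj
    rcases hpu α hα with rfl | rfl | huα
    · exact .inl q.start_mem_support
    · exact .inl q.end_mem_support
    rcases hqv ω hω with rfl | rfl | hvω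
    · exact .inr p.start_mem_support
    · exact .inr p.end_mem_support
    exact absurd (huα.trans <| (ReachAvoiding.of_adj hadj huα.right_notMem hvω.right_notMem).trans
      hvω.symm) hnr
  have hcommon : ∀ w ∈ p.support, w ∈ q.support → w = x ∨ w = y := fun w hwp hwq => by
    rcases hpu w hwp with hw | hw | huw
    exacts [.inl hw, .inr hw,
      (hqv w hwq).imp_right (·.resolve_right fun hvw => hnr (huw.trans hvw.symm))]
  let c := p.append q.reverse
  have hp2 := two_le_length_of_not_adj p hxy hnadj
  have hq2 := two_le_length_of_not_adj q hxy hnadj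
  obtain ⟨α, ω, hα, hω, hadj, hnot⟩ := hch x c (isCycle_append_reverse hp hq hcommon hp2)
    (by simp only [c, Walk.length_append, Walk.length_reverse]; omega)
  simp only [c, Walk.mem_support_append_iff, Walk.support_reverse, List.mem_reverse,
    Walk.edges_append, Walk.edges_reverse, List.mem_append, not_or] at hα hω hnot
  have hin : ∀ {a b}, h.Adj a b → (a ∈ p.support ∧ b ∈ p.support) ∨
      (a ∈ q.support ∧ b ∈ q.support) → s(a, b) ∈ p.edges ∨ s(a, b) ∈ q.edges := by
    rintro a b hab (⟨ha, hb⟩ | ⟨ha, hb⟩)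
    exacts [.inl (hpc.mem_edges ha hb hab), .inr (hqc.mem_edges ha hb hab)]
  refine (hin hadj ?_).elim hnot.1 hnot.2
  rcases hα with hα | hα <;> rcases hω with hω | hω
  · exact .inl ⟨hα, hω⟩
  · exact (hcross α hα ω hω hadj).elim (fun h' => .inr ⟨h', hω⟩) (fun h' => .inl ⟨hα, h'⟩)
  · exact (hcross ω hω α hα hadj.symm).elim (fun h' => .inr ⟨hα, h'⟩) (fun h' => .inl ⟨h', hω⟩)
  · exact .inr ⟨hα, hω⟩

end Chordal

section CrossEdges

variable {V : Type} {h k : SimpleGraph V} {S : Set V} {u v : V}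

def deleteCrossEdges (h k : SimpleGraph V) (S : Set V) : SimpleGraph V where
  Adj u v := h.Adj u v ∧ (u ∈ S ∨ v ∈ S ∨ ReachAvoiding k S u v)
  symm := ⟨fun _ _ ⟨hadj, huv⟩ => ⟨hadj.symm, by
    rcases huv with hu | hv | huv
    exacts [.inr (.inl hu), .inl hv, .inr (.inr huv.symm)]⟩⟩
  loopless := ⟨fun _ huu => h.loopless.irrefl _ huu.1⟩

@[simp]
lemma deleteCrossEdges_adj :
    (deleteCrossEdges h k S).Adj u v ↔ h.Adj u v ∧ (u ∈ S ∨ v ∈ S ∨ ReachAvoiding k S u v) :=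
  Iff.rfl

lemma deleteCrossEdges_le : deleteCrossEdges h k S ≤ h := fun _ _ hadj => hadj.1

lemma le_deleteCrossEdges (hkh : k ≤ h) : k ≤ deleteCrossEdges h k S := by
  intro a b hab
  refine deleteCrossEdges_adj.mpr ⟨hkh hab, ?_⟩
  by_cases ha : a ∈ S
  · exact .inl ha
  by_cases hb : b ∈ S
  · exact .inr (.inl hb)
  · exact .inr (.inr (.of_adj hab ha hb))

lemma ReachAvoiding.of_deleteCrossEdges (huv : ReachAvoiding (deleteCrossEdges h k S) S u v) :
    ReachAvoiding k S u v :=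
  huv.lift fun _ _ hadj ha hb => ((deleteCrossEdges_adj.mp hadj).2.resolve_left ha).resolve_left hb

lemma isChordal_deleteCrossEdges (hch : IsChordal h) (hS : h.IsClique S) :
    IsChordal (deleteCrossEdges h k S) := by
  intro v c hc hlen
  obtain ⟨α, ω, hα, hω, hadj, hnot⟩ :=
    hch v (c.mapLe deleteCrossEdges_le) (hc.mapLe _) (by rwa [Walk.length_mapLe])
  rw [Walk.support_mapLe_eq_support] at hα hω
  rw [Walk.edges_mapLe_eq_edges] at hnot
  by_cases hkeep : (deleteCrossEdges h k S).Adj α ω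
  · exact ⟨α, ω, hα, hω, hkeep, hnot⟩
  obtain ⟨hαS, hωS, hnr⟩ : α ∉ S ∧ ω ∉ S ∧ ¬ ReachAvoiding k S α ω := by
    simpa [hadj] using hkeep
  -- both arcs of `c` between `α` and `ω` must pass through `S`
  obtain ⟨p, q, -, -, hsupp, hedges, hpq⟩ := exists_arcs_of_isCycle hc hα hω hadj.ne
  have hmeet : ∀ r : (deleteCrossEdges h k S).Walk α ω, ∃ s ∈ r.support, s ∈ S := fun r => by
    by_contra! hr
    exact hnr (ReachAvoiding.of_deleteCrossEdges ⟨r, hr⟩)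
  obtain ⟨s, hsp, hsS⟩ := hmeet p
  obtain ⟨t, htq, htS⟩ := hmeet q
  have hpqS : ∀ z ∈ p.support, z ∈ q.support → z ∉ S := fun z hzp hzq hzS => by
    rcases hpq z hzp hzq with rfl | rfl
    exacts [hαS hzS, hωS hzS]
  have hst : s ≠ t := fun hst => hpqS s hsp (hst ▸ htq) hsS
  refine ⟨s, t, (hsupp s).2 (.inl hsp), (hsupp t).2 (.inr htq),
    deleteCrossEdges_adj.mpr ⟨hS hsS htS hst, .inl hsS⟩, fun hmem => ?_⟩
  rcases (hedges _).1 hmem with hmem | hmem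
  · exact hpqS t (p.snd_mem_support_of_mem_edges hmem) htq htS
  · exact hpqS s hsp (q.fst_mem_support_of_mem_edges hmem) hsS

lemma reachAvoiding_iff_of_mem_minTri (hmt : h ∈ MinTri k) (hS : h.IsClique S) :
    ReachAvoiding h S u v ↔ ReachAvoiding k S u v := by
  have heq : deleteCrossEdges h k S = h := by
    by_contra hne
    exact hmt.2.2 _ (le_deleteCrossEdges hmt.1) (lt_of_le_of_ne deleteCrossEdges_le hne)
      (isChordal_deleteCrossEdges hmt.2.1 hS)
  exact ⟨fun huv => ReachAvoiding.of_deleteCrossEdges (heq ▸ huv), .mono hmt.1⟩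

end CrossEdges

section FillEdges

variable {V : Type} {h k : SimpleGraph V} {a b v x y : V}

lemma IsChordal.length_le_two (hch : IsChordal h) {p : h.Walk x y} (hp : p.IsPath)
    (hxy : h.Adj x y) (hnot : s(x, y) ∉ p.edges)
    (hchord : ∀ α ∈ p.support, ∀ ω ∈ p.support, h.Adj α ω →
      s(α, ω) ∈ p.edges ∨ s(α, ω) = s(x, y)) :
    p.length ≤ 2 := by
  by_contra! hlen
  have hc : (Walk.cons hxy.symm p).IsCycle :=
    (Walk.cons_isCycle_iff p hxy.symm).mpr ⟨hp, by rwa [Sym2.eq_swap]⟩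
  obtain ⟨α, ω, hα, hω, hadj, hnot'⟩ := hch y _ hc (by simp only [Walk.length_cons]; omega)
  have hsupp : ∀ z ∈ (Walk.cons hxy.symm p).support, z ∈ p.support := fun z hz => by
    rcases List.mem_cons.mp hz with rfl | hz
    exacts [p.end_mem_support, hz]
  simp only [Walk.edges_cons, List.mem_cons, not_or, Sym2.eq_swap (a := y)] at hnot'
  exact (hchord α (hsupp α hα) ω (hsupp ω hω) hadj).elim hnot'.2 hnot'.1

/-- `h` minus the fill edge `xy` is not chordal, and `xy` is the only chord in `h` of a
chordless cycle of it. -/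
lemma exists_isCycle_of_mem_minTri (hmt : h ∈ MinTri k) (hxy : h.Adj x y) (hnk : ¬ k.Adj x y) :
    ∃ (v : V) (c : h.Walk v v), c.IsCycle ∧ x ∈ c.support ∧ y ∈ c.support ∧
      s(x, y) ∉ c.edges ∧ ∀ α ∈ c.support, ∀ ω ∈ c.support, h.Adj α ω →
        s(α, ω) ∈ c.edges ∨ s(α, ω) = s(x, y) := by
  have hkd : k ≤ h.deleteEdges {s(x, y)} := fun a b hab => by
    refine (deleteEdges_adj ..).mpr ⟨hmt.1 hab, fun he => hnk ?_⟩
    rcases Sym2.eq_iff.mp he with ⟨rfl, rfl⟩ | ⟨rfl, rfl⟩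
    exacts [hab, hab.symm]
  have hlt : h.deleteEdges {s(x, y)} < h :=
    lt_of_le_of_ne (deleteEdges_le _) fun he => by
      have hxy' : (h.deleteEdges {s(x, y)}).Adj x y := by rw [he]; exact hxy
      simp at hxy'
  have hnch := hmt.2.2 _ hkd hlt
  simp only [IsChordal, not_forall, not_exists, not_and] at hnch
  obtain ⟨v, c, hc, hlen, hchordless⟩ := hnch
  let c' := c.mapLe (deleteEdges_le {s(x, y)})
  have hchord : ∀ α ∈ c'.support, ∀ ω ∈ c'.support, h.Adj α ω →
      s(α, ω) ∈ c'.edges ∨ s(α, ω) = s(x, y) := by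
    intro α hα ω hω hadj
    rw [Walk.support_mapLe_eq_support] at hα hω
    rw [Walk.edges_mapLe_eq_edges, or_iff_not_imp_right]
    intro hne
    by_contra hnot
    exact hchordless α ω hα hω ((deleteEdges_adj ..).mpr ⟨hadj, hne⟩) hnot
  obtain ⟨α, ω, hα, hω, hadj, hnot⟩ := hmt.2.1 v c' (hc.mapLe _) (by rwa [Walk.length_mapLe])
  have hαω := (hchord α hα ω hω hadj).resolve_left hnot
  refine ⟨v, c', hc.mapLe _, ?_, ?_, hαω ▸ hnot, hchord⟩ <;>
    rcases Sym2.eq_iff.mp hαω with ⟨rfl, rfl⟩ | ⟨rfl, rfl⟩ <;> assumption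

lemma exists_square_of_isCycle (hch : IsChordal h) (hxy : h.Adj x y) {c : h.Walk v v}
    (hc : c.IsCycle) (hx : x ∈ c.support) (hy : y ∈ c.support) (hnot : s(x, y) ∉ c.edges)
    (hchord : ∀ α ∈ c.support, ∀ ω ∈ c.support, h.Adj α ω →
      s(α, ω) ∈ c.edges ∨ s(α, ω) = s(x, y)) :
    ∃ a b, h.Adj x a ∧ h.Adj a y ∧ h.Adj x b ∧ h.Adj b y ∧ a ≠ b ∧ ¬ h.Adj a b := by
  obtain ⟨p, q, hp, hq, hsupp, hedges, hpq⟩ := exists_arcs_of_isCycle hc hx hy hxy.ne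
  have harc : ∀ r r' : h.Walk x y, r.IsPath → (∀ e, e ∈ c.edges ↔ e ∈ r.edges ∨ e ∈ r'.edges) →
      (∀ z ∈ r.support, z ∈ c.support) → (∀ z ∈ r.support, z ∈ r'.support → z = x ∨ z = y) →
      ∃ a, ∃ (hxa : h.Adj x a) (hay : h.Adj a y), r = .cons hxa (.cons hay .nil) := by
    intro r r' hr hedges' hrc hrr'
    have hrchord : ∀ α ∈ r.support, ∀ ω ∈ r.support, h.Adj α ω →
        s(α, ω) ∈ r.edges ∨ s(α, ω) = s(x, y) := by
      intro α hα ω hω hadj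
      refine (hchord α (hrc α hα) ω (hrc ω hω) hadj).imp_left fun he => ?_
      refine ((hedges' _).1 he).resolve_right fun he' => hnot ?_
      rcases hrr' α hα (r'.fst_mem_support_of_mem_edges he') with rfl | rfl <;>
        rcases hrr' ω hω (r'.snd_mem_support_of_mem_edges he') with rfl | rfl
      exacts [absurd rfl hadj.ne, he, Sym2.eq_swap ▸ he, absurd rfl hadj.ne]
    have hrnot : s(x, y) ∉ r.edges := fun he => hnot ((hedges' _).2 (.inl he))
    exact exists_eq_cons_cons_nil (hch.length_le_two hr hxy hrnot hrchord) hxy.ne hrnot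
  obtain ⟨a, hxa, hay, rfl⟩ := harc p q hp hedges (fun z hz => (hsupp z).2 (.inl hz)) hpq
  obtain ⟨b, hxb, hby, rfl⟩ := harc q _ hq (fun e => (hedges e).trans or_comm)
    (fun z hz => (hsupp z).2 (.inr hz)) fun z hzq hzp => hpq z hzp hzq
  have hab : a ≠ b := by
    rintro rfl
    rcases hpq a (by simp) (by simp) with rfl | rfl
    exacts [hxa.ne rfl, hay.ne rfl]
  refine ⟨a, b, hxa, hay, hxb, hby, hab, fun hadj => ?_⟩
  have := hchord a ((hsupp a).2 (.inl (by simp))) b ((hsupp b).2 (.inr (by simp))) hadj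
  simp [hedges, hab, hab.symm, hxa.ne.symm, hay.ne, hxb.ne.symm, hby.ne] at this


lemma exists_mem_minSep_of_square [Finite V] (hxa : h.Adj x a) (hay : h.Adj a y)
    (hxb : h.Adj x b) (hby : h.Adj b y) (hab : a ≠ b) (hnadj : ¬ h.Adj a b) :
    ∃ T ∈ MinSep h, x ∈ T ∧ y ∈ T := by
  obtain ⟨T, hT⟩ := exists_isMinSepPair_of_not_adj hab hnadj
  exact ⟨T, ⟨a, b, hT⟩, hT.1.mem_of_adj_of_adj hxa.symm hxb, hT.1.mem_of_adj_of_adj hay hby.symm⟩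

theorem exists_mem_minSep_of_mem_minTri [Finite V] (hmt : h ∈ MinTri k) (hxy : h.Adj x y)
    (hnk : ¬ k.Adj x y) : ∃ T ∈ MinSep h, x ∈ T ∧ y ∈ T := by
  obtain ⟨v, c, hc, hx, hy, hnot, hchord⟩ := exists_isCycle_of_mem_minTri hmt hxy hnk
  obtain ⟨a, b, hxa, hay, hxb, hby, hab, hnadj⟩ :=
    exists_square_of_isCycle hmt.2.1 hxy hc hx hy hnot hchord
  exact exists_mem_minSep_of_square hxa hay hxb hby hab hnadj

end FillEdges

section Saturation

variable {V : Type} {g h : SimpleGraph V} {φ : Set (Set V)} {S T : Set V} {u v : V}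

lemma le_satSet : g ≤ satSet g φ := fun _ _ => .inl

lemma isClique_satSet (hS : S ∈ φ) : (satSet g φ).IsClique S :=
  fun _ hx _ hy hxy => .inr ⟨hxy, S, hS, hx, hy⟩

lemma satSet_le (hle : g ≤ h) (hφ : ∀ S ∈ φ, h.IsClique S) : satSet g φ ≤ h := by
  rintro a b (hab | ⟨hne, S, hS, ha, hb⟩)
  exacts [hle hab, hφ S hS ha hb hne]

lemma reachAvoiding_satSet_iff (hT : ∀ S ∈ φ, ¬ Crosses g T S) :
    ReachAvoiding (satSet g φ) T u v ↔ ReachAvoiding g T u v := by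
  refine reachAvoiding_iff_of_forall_adj le_satSet ?_
  rintro a b (hab | ⟨-, S, hS, ha, hb⟩) haT hbT
  exacts [.of_adj hab haT hbT, not_crosses_iff.mp (hT S hS) a ha b hb haT hbT]

lemma not_crosses_of_isClique (hT : h.IsClique T)
    (hS : ∀ u v, ReachAvoiding h S u v → ReachAvoiding g S u v) : ¬ Crosses g S T :=
  not_crosses_iff.mpr fun x hx y hy hxS hyS => by
    rcases eq_or_ne x y with rfl | hxy
    · exact .refl hxS
    · exact hS x y (.of_adj (hT hx hy hxy) hxS hyS)

namespace PairwiseParallel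

lemma not_crosses (hφ : PairwiseParallel g φ) (hS : S ∈ φ) (hT : T ∈ φ) : ¬ Crosses g S T := by
  rcases eq_or_ne S T with rfl | hne
  exacts [not_crosses_self, hφ.2 hS hT hne]

lemma reachAvoiding_iff_of_mem (hφ : PairwiseParallel g φ) (hh : h ∈ MinTri (satSet g φ))
    (hS : S ∈ φ) : ReachAvoiding h S u v ↔ ReachAvoiding g S u v :=
  (reachAvoiding_iff_of_mem_minTri hh ((isClique_satSet hS).mono hh.1)).trans
    (reachAvoiding_satSet_iff fun _ hT => hφ.not_crosses hS hT)

lemma reachAvoiding_iff_of_isClique (hφ : PairwiseParallel g φ)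
    (hh : h ∈ MinTri (satSet g φ)) (hT : h.IsClique T) :
    ReachAvoiding h T u v ↔ ReachAvoiding g T u v :=
  (reachAvoiding_iff_of_mem_minTri hh hT).trans <| reachAvoiding_satSet_iff fun _ hS =>
    not_crosses_symm (hφ.1 hS) <| not_crosses_of_isClique hT fun _ _ =>
      (hφ.reachAvoiding_iff_of_mem hh hS).mp

lemma subset_minSep (hφ : PairwiseParallel g φ) (hh : h ∈ MinTri (satSet g φ)) :
    φ ⊆ MinSep h := by
  intro S hS
  obtain ⟨u, v, huv⟩ := hφ.1 hS
  refine ⟨u, v, huv.of_le (le_satSet.trans hh.1) fun hr => ?_⟩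
  exact (isSep_iff.mp huv.1).2.2 ((hφ.reachAvoiding_iff_of_mem hh hS).mp hr)

lemma minSep_subset_minSep (hφ : PairwiseParallel g φ) (hh : h ∈ MinTri (satSet g φ)) :
    MinSep h ⊆ MinSep g := by
  rintro T ⟨u, v, huv⟩
  have hT := hh.2.1.isClique_of_isMinSepPair huv
  exact ⟨u, v, (isMinSepPair_congr fun S hS _ _ =>
    hφ.reachAvoiding_iff_of_isClique hh (hT.subset hS)).mp huv⟩

lemma pairwiseParallel_minSep (hφ : PairwiseParallel g φ) (hh : h ∈ MinTri (satSet g φ)) :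
    PairwiseParallel g (MinSep h) := by
  refine ⟨hφ.minSep_subset_minSep hh, fun S ⟨_, _, hS⟩ T ⟨_, _, hT⟩ _ => ?_⟩
  exact not_crosses_of_isClique (hh.2.1.isClique_of_isMinSepPair hT) fun _ _ =>
    (hφ.reachAvoiding_iff_of_isClique hh (hh.2.1.isClique_of_isMinSepPair hS)).mp

lemma mem_minTri (hφ : PairwiseParallel g φ) (hh : h ∈ MinTri (satSet g φ)) : h ∈ MinTri g := by
  refine ⟨le_satSet.trans hh.1, hh.2.1, fun h' hgh' hlt hch' => hh.2.2 h' ?_ hlt hch'⟩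
  -- a chordal `h'` between `g` and `h` still has every member of `φ` as a minimal separator
  refine satSet_le hgh' fun S hS => ?_
  obtain ⟨u, v, huv⟩ := hφ.1 hS
  refine hch'.isClique_of_isMinSepPair (huv.of_le hgh' fun hr => ?_)
  exact (isSep_iff.mp huv.1).2.2 ((hφ.reachAvoiding_iff_of_mem hh hS).mp (hr.mono hlt.le))

lemma exists_mem_minSep_of_adj [Finite V] (hφ : PairwiseParallel g φ) (hh : h ∈ MinTri (satSet g φ))
    {x y : V} (hxy : h.Adj x y) (hg : ¬ g.Adj x y) : ∃ T ∈ MinSep h, x ∈ T ∧ y ∈ T := by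
  by_cases hsat : (satSet g φ).Adj x y
  · obtain ⟨-, S, hS, hx, hy⟩ := hsat.resolve_left hg
    exact ⟨S, hφ.subset_minSep hh hS, hx, hy⟩
  · exact exists_mem_minSep_of_mem_minTri hh hxy hsat

lemma minSep_eq_of_subset [Finite V] (hφ : PairwiseParallel g φ) (hh : h ∈ MinTri (satSet g φ))
    {ψ : Set (Set V)} (hψ : PairwiseParallel g ψ) (hsub : MinSep h ⊆ ψ) : MinSep h = ψ := by
  refine hsub.antisymm fun R hR => ?_
  obtain ⟨u, v, huv⟩ := hψ.1 hR
  refine ⟨u, v, huv.of_le (le_satSet.trans hh.1) fun hr => (isSep_iff.mp huv.1).2.2 ?_⟩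
  refine hr.lift fun x y hxy hx hy => ?_
  by_cases hg : g.Adj x y
  · exact .of_adj hg hx hy
  obtain ⟨T, hT, hxT, hyT⟩ := hφ.exists_mem_minSep_of_adj hh hxy hg
  exact not_crosses_iff.mp (hψ.not_crosses hR (hsub hT)) x hxT y hyT hx hy

end PairwiseParallel

end Saturation

/-- A minimal triangulation `h` of `g_[φ]` is a minimal triangulation of `g`, and
`MinSep h` is a maximal pairwise parallel set of minimal separators of `g`
containing `φ`. -/
theorem extendInd_correct {V : Type} [Fintype V] (g : SimpleGraph V)
    (φ : Set (Set V)) (hφ : PairwiseParallel g φ)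
    (h : SimpleGraph V) (hh : h ∈ MinTri (satSet g φ)) :
    h ∈ MinTri g ∧ MaxPairwiseParallel g (MinSep h) ∧ φ ⊆ MinSep h :=
  ⟨hφ.mem_minTri hh,
    ⟨hφ.pairwiseParallel_minSep hh, fun _ hψ hsub => hφ.minSep_eq_of_subset hh hψ hsub⟩,
    hφ.subset_minSep hh⟩
end
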